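/- arXiv:1903.04492 — 3 statements merged into one kernel-verified Lean document; each statement's English description precedes it below -/
import Mathlib

section
/- Let n ≥ 1 and let G be a connected simple graph on the vertex set {0, 1, …, n}. Then the origin 0 is an interior point of the adjacency polytope ∇_G; in particular ∇_G is a full-dimensional (n-dimensional) polytope in ℝⁿ. -/
/-- For a connected simple graph `G` on the nodes `{0, 1, …, n}` (with `n ≥ 1`),
the origin is an interior point of the adjacency polytope
`∇_G = conv{ eᵢ − eⱼ : {i,j} ∈ E(G) }` (where `e₀ = 0` and `e₁,…,eₙ` is the standard
basis of `ℝⁿ`); in particular `∇_G` is full-dimensional. -/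
theorem zero_mem_interior_adjacency_polytope
    (n : ℕ) (hn : 1 ≤ n) (G : SimpleGraph (Fin (n + 1))) (hG : G.Connected)
    (e : Fin (n + 1) → EuclideanSpace ℝ (Fin n))
    (he : ∀ i, e i = if h : i = 0 then 0 else EuclideanSpace.single (i.pred h) 1)
    (V : Set (EuclideanSpace ℝ (Fin n)))
    (hV : V = {x | ∃ i j : Fin (n + 1), G.Adj i j ∧ x = e i - e j}) :
    (0 : EuclideanSpace ℝ (Fin n)) ∈ interior (convexHull ℝ V) ∧
      affineSpan ℝ (convexHull ℝ V) = ⊤ := by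
  -- symmetry of V
  have hsymm : ∀ x ∈ V, -x ∈ V := by
    intro x hx
    rw [hV] at hx ⊢
    obtain ⟨i, j, hadj, rfl⟩ := hx
    exact ⟨j, i, hadj.symm, by abel⟩
  -- V is nonempty
  have hVne : V.Nonempty := by
    have hne : (Fin.last n) ≠ (0 : Fin (n + 1)) := by
      intro h
      have := congrArg Fin.val h
      simp [Fin.last] at this
      omega
    obtain ⟨w⟩ := hG.preconnected (Fin.last n) 0
    have hadj := w.adj_snd (SimpleGraph.Walk.not_nil_of_ne hne)
    refine ⟨e (Fin.last n) - e (w.getVert 1), ?_⟩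
    rw [hV]
    exact ⟨_, _, hadj, rfl⟩
  obtain ⟨v, hv⟩ := hVne
  -- 0 ∈ convexHull V
  have h0 : (0 : EuclideanSpace ℝ (Fin n)) ∈ convexHull ℝ V := by
    have h1 : v ∈ convexHull ℝ V := subset_convexHull ℝ V hv
    have h2 : -v ∈ convexHull ℝ V := subset_convexHull ℝ V (hsymm v hv)
    have := (convex_convexHull ℝ V) h1 h2 (by norm_num : (0:ℝ) ≤ 1/2)
      (by norm_num : (0:ℝ) ≤ 1/2) (by norm_num)
    simpa [smul_neg] using this
  -- walk differences lie in the span of V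
  have hwalk : ∀ (u w : Fin (n + 1)) (_ : G.Walk u w),
      e u - e w ∈ Submodule.span ℝ V := by
    intro u w p
    induction p with
    | nil => simp
    | @cons a b c h p ih =>
        have hab : e a - e b ∈ V := hV ▸ ⟨a, b, h, rfl⟩
        have : e a - e c = (e a - e b) + (e b - e c) := by abel
        rw [this]
        exact Submodule.add_mem _ (Submodule.subset_span hab) ih
  have hei : ∀ i, e i ∈ Submodule.span ℝ V := by
    intro i
    obtain ⟨p⟩ := hG.preconnected 0 i
    have := hwalk 0 i p
    have h0' : e 0 = 0 := by rw [he 0]; simp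
    rw [h0'] at this
    simpa using Submodule.neg_mem _ this
  -- span V = ⊤
  have hspan : Submodule.span ℝ V = ⊤ := by
    rw [eq_top_iff, ← (EuclideanSpace.basisFun (Fin n) ℝ).toBasis.span_eq,
      Submodule.span_le]
    rintro x ⟨k, rfl⟩
    have : (EuclideanSpace.basisFun (Fin n) ℝ).toBasis k = e k.succ := by
      rw [he k.succ]
      rw [dif_neg (Fin.succ_ne_zero k)]
      simp [EuclideanSpace.basisFun_apply]
    rw [this]
    exact hei k.succ
  -- affine span is top
  have haff : affineSpan ℝ (convexHull ℝ V) = ⊤ := by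
    rw [← AffineSubspace.direction_eq_top_iff_of_nonempty
      ((affineSpan_nonempty ℝ).2 ⟨0, h0⟩)]
    rw [direction_affineSpan, eq_top_iff, ← hspan, Submodule.span_le]
    intro x hx
    have : x - 0 ∈ vectorSpan ℝ (convexHull ℝ V) :=
      vsub_mem_vectorSpan ℝ (subset_convexHull ℝ V hx) h0
    simpa using this
  refine ⟨?_, haff⟩
  -- interior nonempty
  obtain ⟨x, hx⟩ := ((convex_convexHull ℝ V).interior_nonempty_iff_affineSpan_eq_top).2 haff
  -- interior is symmetric
  have hVneg : -V = V := by
    ext y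
    constructor
    · intro hy
      have := hsymm (-y) (Set.mem_neg.mp hy)
      simpa using this
    · intro hy
      exact Set.mem_neg.mpr (by simpa using hsymm y hy)
  have hCneg : convexHull ℝ V = -(convexHull ℝ V) := by
    conv_lhs => rw [← hVneg]
    exact convexHull_neg V
  have hxneg : -x ∈ interior (convexHull ℝ V) := by
    have ho : IsOpen (-(interior (convexHull ℝ V))) := isOpen_interior.neg
    have hsub : -(interior (convexHull ℝ V)) ⊆ convexHull ℝ V := by
      intro y hy
      have h1 : -y ∈ convexHull ℝ V := interior_subset (Set.mem_neg.mp hy)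
      rw [hCneg]
      exact Set.mem_neg.mpr h1
    exact interior_maximal hsub ho (Set.neg_mem_neg.mpr hx)
  have hconvint : Convex ℝ (interior (convexHull ℝ V)) :=
    (convex_convexHull ℝ V).interior
  have := hconvint hx hxneg (by norm_num : (0:ℝ) ≤ 1/2)
    (by norm_num : (0:ℝ) ≤ 1/2) (by norm_num)
  simpa [smul_neg] using this
end

section
/- Let α : {0,…,n} → ℝ and let h < 0 be a real number. Let c₀, c₁, …, c_ℓ be a sequence of nodes with c_ℓ = c₀ and ℓ ≥ 1 (a closed cycle) such that for every k = 0,…,ℓ−1 both α(c_k) − α(c_{k+1}) ≥ h and α(c_{k+1}) − α(c_k) ≥ h. Suppose moreover that for some m ≤ ℓ the first m steps satisfy the equality α(c_k) − α(c_{k+1}) = h for all k = 0,…,m−1. Then 2m ≤ ℓ. -/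
/-- Half-cycle property of facet subnetworks: let `h < 0`, and let `c₀,…,c_ℓ` be a closed
cycle (`c_ℓ = c₀`, `ℓ ≥ 1`) along which both orientations of every step satisfy
`α(c_k) − α(c_{k+1}) ≥ h` and `α(c_{k+1}) − α(c_k) ≥ h`. If the first `m ≤ ℓ` steps
satisfy the equality `α(c_k) − α(c_{k+1}) = h`, then `2m ≤ ℓ`. -/
theorem facet_subnetwork_half_cycle
    (n : ℕ) (α : Fin (n + 1) → ℝ) (h : ℝ) (hh : h < 0)
    (ℓ : ℕ) (hℓ : 1 ≤ ℓ) (c : ℕ → Fin (n + 1)) (hclosed : c ℓ = c 0)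
    (hcyc : ∀ k < ℓ, α (c k) - α (c (k + 1)) ≥ h ∧ α (c (k + 1)) - α (c k) ≥ h)
    (m : ℕ) (hm : m ≤ ℓ)
    (heq : ∀ k < m, α (c k) - α (c (k + 1)) = h) :
    2 * m ≤ ℓ := by
  set f : ℕ → ℝ := fun k => α (c k) - α (c (k + 1)) with hf
  have htel : ∑ k ∈ Finset.range ℓ, f k = 0 := by
    have := Finset.sum_range_sub' (fun k => α (c k)) ℓ
    simpa [hf, hclosed] using this
  have hsplit : ∑ k ∈ Finset.range ℓ, f k
      = ∑ k ∈ Finset.range m, f k + ∑ k ∈ Finset.Ico m ℓ, f k := by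
    rw [← Finset.sum_range_add_sum_Ico _ hm]
  have h1 : ∑ k ∈ Finset.range m, f k = m * h := by
    rw [Finset.sum_congr rfl (fun k hk => heq k (Finset.mem_range.mp hk))]
    simp [mul_comm]
  have h2 : ∑ k ∈ Finset.Ico m ℓ, f k ≤ (ℓ - m : ℕ) * (-h) := by
    have : ∑ k ∈ Finset.Ico m ℓ, f k ≤ ∑ _k ∈ Finset.Ico m ℓ, (-h) := by
      apply Finset.sum_le_sum
      intro k hk
      have hkℓ := (Finset.mem_Ico.mp hk).2
      have := (hcyc k hkℓ).2
      simp [hf]; linarith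
    simpa [Nat.card_Ico] using this
  have key : (m : ℝ) * h + (↑(ℓ - m) * (-h)) ≥ 0 := by
    rw [hsplit, h1] at htel
    linarith
  have hm' : (m : ℝ) ≤ (↑(ℓ - m) : ℝ) := by
    nlinarith [key]
  have : (m : ℝ) ≤ (ℓ : ℝ) - m := by
    rwa [Nat.cast_sub hm] at hm'
  have : (2 * m : ℝ) ≤ (ℓ : ℝ) := by push_cast; linarith
  exact_mod_cast this
end

section
/- Let n ≥ 1 and let T be a directed graph on nodes {0,…,n} with exactly n directed edges (i₁,j₁), …, (iₙ,jₙ) whose underlying undirected graph is a tree. Let A be an invertible n × n complex matrix indexed by equations k = 1,…,n and edges e = 1,…,n, and let c = (c₁,…,cₙ) ∈ ℂⁿ be such that every coordinate of A⁻¹c is nonzero. Then the facet subsystem c_k = Σ_{e=1}^{n} A_{k,e} · x_{i_e} / x_{j_e} (k = 1,…,n) has a unique solution (x₀, x₁, …, xₙ) with x₀ = 1 and x_i ≠ 0 for all i = 1,…,n. -/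
open Complex Matrix


/-- Unique solvability of a primitive facet subsystem: let the directed edges
`(a e, b e)`, `e = 1,…,n`, form (as undirected edges) a tree on the nodes `{0,…,n}`, let
`A` be an invertible `n × n` complex matrix, and let `c ∈ ℂⁿ` be such that every
coordinate of `A⁻¹ c` is nonzero. Then the facet subsystem
`c k = Σₑ A k e · x (a e) / x (b e)` has a unique solution with `x 0 = 1` and all
coordinates nonzero. -/
theorem primitive_facet_subsystem_generic_unique_solution
    (n : ℕ) (hn : 1 ≤ n) (a b : Fin n → Fin (n + 1))
    (hne : ∀ k, a k ≠ b k)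
    (hinj : ∀ k l : Fin n,
      ((a k = a l ∧ b k = b l) ∨ (a k = b l ∧ b k = a l)) → k = l)
    (htree : (SimpleGraph.fromRel fun u v : Fin (n + 1) =>
        ∃ k, (a k = u ∧ b k = v) ∨ (a k = v ∧ b k = u)).Connected)
    (A : Matrix (Fin n) (Fin n) ℂ) (hA : IsUnit A.det)
    (c : Fin n → ℂ) (hc : ∀ k, (A⁻¹.mulVec c) k ≠ 0) :
    ∃! x : Fin (n + 1) → ℂ,
      x 0 = 1 ∧ (∀ i, x i ≠ 0) ∧
        ∀ k, c k = ∑ e : Fin n, A k e * (x (a e) / x (b e)) := by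
  classical
  set y : Fin n → ℂ := A⁻¹.mulVec c with hy
  -- constancy along the connected graph
  have hconst : ∀ (f : Fin (n+1) → ℂ), (∀ k, f (a k) = f (b k)) →
      ∀ u v : Fin (n+1), f u = f v := by
    intro f hf u v
    obtain ⟨p⟩ := htree.preconnected u v
    induction p with
    | nil => rfl
    | cons h p ih =>
      refine Eq.trans ?_ ih
      rw [SimpleGraph.fromRel_adj] at h
      obtain ⟨-, h | h⟩ := h <;>
        obtain ⟨k, ⟨h1, h2⟩ | ⟨h1, h2⟩⟩ := h <;>
        [exact h1 ▸ h2 ▸ hf k; exact h2 ▸ h1 ▸ (hf k).symm;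
         exact h2 ▸ h1 ▸ (hf k).symm; exact h1 ▸ h2 ▸ hf k]
  -- equivalence with r = y
  have hsys : ∀ r : Fin n → ℂ, (∀ k, c k = ∑ e, A k e * r e) ↔ r = y := by
    intro r
    constructor
    · intro h
      have hc' : A.mulVec r = c := by
        funext k; simp [Matrix.mulVec, dotProduct, (h k).symm]
      have : A⁻¹.mulVec (A.mulVec r) = y := by rw [hc']
      rwa [Matrix.mulVec_mulVec, Matrix.nonsing_inv_mul A hA, Matrix.one_mulVec] at this
    · rintro rfl k
      have : A.mulVec (A⁻¹.mulVec c) = c := by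
        rw [Matrix.mulVec_mulVec, Matrix.mul_nonsing_inv A hA, Matrix.one_mulVec]
      have := congrFun this k
      simp only [Matrix.mulVec, dotProduct] at this
      rw [← this]
      simp only [hy, Matrix.mulVec, dotProduct]
  -- existence: solve x (a e) = y e * x (b e) over the tree
  -- additive incidence map
  let L : (Fin (n+1) → ℂ) →ₗ[ℂ] (Fin n → ℂ) :=
    { toFun := fun w e => w (a e) - w (b e)
      map_add' := by intro w₁ w₂; funext e; simp; ring
      map_smul' := by intro m w; funext e; simp [mul_sub] }
  have hkerle : LinearMap.ker L ≤ Submodule.span ℂ {(fun _ => (1:ℂ) : Fin (n+1) → ℂ)} := by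
    intro w hw
    have hw' : ∀ k, w (a k) = w (b k) := by
      intro k
      have := congrFun (LinearMap.mem_ker.mp hw) k
      simpa [L, sub_eq_zero] using this
    have : w = w 0 • (fun _ => (1:ℂ)) := by
      funext i; simpa using hconst w hw' i 0
    rw [this]
    exact Submodule.smul_mem _ _ (Submodule.mem_span_singleton_self _)
  have hLsurj : Function.Surjective L := by
    rw [← LinearMap.range_eq_top]
    apply Submodule.eq_top_of_finrank_eq
    have h1 : Module.finrank ℂ (LinearMap.ker L) ≤ 1 := by
      calc Module.finrank ℂ (LinearMap.ker L)
          ≤ Module.finrank ℂ (Submodule.span ℂ {(fun _ => (1:ℂ) : Fin (n+1) → ℂ)}) :=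
            Submodule.finrank_mono hkerle
        _ ≤ 1 := le_of_eq (finrank_span_singleton (by
              intro h
              have := congrFun h 0
              simp at this))
    have h2 := L.finrank_range_add_finrank_ker
    have h3 : Module.finrank ℂ (Fin (n+1) → ℂ) = n + 1 := by simp
    have h4 : Module.finrank ℂ (Fin n → ℂ) = n := by simp
    have h5 : Module.finrank ℂ (LinearMap.range L) ≤ n := by
      simpa [h4] using (LinearMap.range L).finrank_le
    omega
  -- choose logs of y
  have hz : ∀ k, ∃ z : ℂ, Complex.exp z = y k := by
    intro k
    have : y k ∈ Set.range Complex.exp := by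
      rw [Complex.range_exp]
      exact hc k
    exact this
  choose z hzy using hz
  obtain ⟨w, hw⟩ := hLsurj z
  refine ⟨fun i => Complex.exp (w i - w 0), ⟨by simp, fun i => Complex.exp_ne_zero _, ?_⟩, ?_⟩
  · rw [hsys]
    funext e
    have hLe : w (a e) - w (b e) = z e := congrFun hw e
    rw [← hzy e, ← hLe, ← Complex.exp_sub]
    ring_nf
  · rintro x ⟨hx0, hxne, hxeq⟩
    have hrx : (fun e => x (a e) / x (b e)) = y := (hsys _).mp hxeq
    funext i
    -- uniqueness: ratio function
    have hfk : ∀ k, (fun j => x j / Complex.exp (w j - w 0)) (a k)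
        = (fun j => x j / Complex.exp (w j - w 0)) (b k) := by
      intro k
      have h1 : x (a k) / x (b k) = y k := congrFun hrx k
      have h2 : Complex.exp (w (a k) - w 0) / Complex.exp (w (b k) - w 0) = y k := by
        rw [← Complex.exp_sub, ← hzy k]
        congr 1
        have := congrFun hw k
        simp only [L, LinearMap.coe_mk, AddHom.coe_mk] at this
        linear_combination this
      have h1' : x (a k) = y k * x (b k) := (div_eq_iff (hxne (b k))).mp h1
      have h2' : Complex.exp (w (a k) - w 0) = y k * Complex.exp (w (b k) - w 0) :=
        (div_eq_iff (Complex.exp_ne_zero _)).mp h2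
      show x (a k) / Complex.exp (w (a k) - w 0) = x (b k) / Complex.exp (w (b k) - w 0)
      rw [div_eq_div_iff (Complex.exp_ne_zero _) (Complex.exp_ne_zero _), h1', h2']
      ring
    have := hconst (fun j => x j / Complex.exp (w j - w 0)) hfk i 0
    simp only [hx0, sub_self, Complex.exp_zero, div_one] at this
    have hne0 : Complex.exp (w i - w 0) ≠ 0 := Complex.exp_ne_zero _
    field_simp at this
    simpa using this
end
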